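/- arXiv:1301.2212 — 3 statements merged into one kernel-verified Lean document; each statement's English description precedes it below -/
import Mathlib

section
/- Suppose $F_X=F_Y=F$ is a known continuous strictly increasing distribution function, and $X,Y$ have joint law given by a strict Archimedean copula with generator $\varphi\in\Omega_1=\{\varphi\in\Omega : \varphi(0)=\infty,\ \lim_{t\uparrow 1}\varphi'(t)<0\}$. Then the copula is identifiable from the law of $(Z,\Delta)=(\min(X,Y),\mathbf{1}_{X\le Y})$: if two copulas generated by elements of $\Omega_1$ give the same distribution function $H$ of $Z$, they are equal. -/
open Set Filter Topology

/-!
Put `g = φ' ∘ ψ`. Since `F` maps onto `(0,1)`, the identity `H = 2F - δ_C ∘ F` shows that the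
diagonals agree, `ψ (2 φ u) = ψ' (2 φ' u)`, which says exactly `g (2 s) = 2 g s`. As both
generators have a nonzero left derivative at `1`, `g s / s = slope φ' 1 (ψ s) / slope φ 1 (ψ s)`
converges as `s → 0⁺`; being constant along `s / 2ⁿ`, it is constant, so `φ'` is a multiple of
`φ` and the two generators define the same copula.
-/

lemma ConvexOn.continuousWithinAt_Iio_of_le_right {f : ℝ → ℝ} {a b : ℝ} (hab : a < b)
    (hf : ConvexOn ℝ (Ioc a b) f) (hmin : ∀ t ∈ Ioc a b, f b ≤ f t) :
    ContinuousWithinAt f (Iio b) b := by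
  obtain ⟨m, ham, hmb⟩ := exists_between hab
  have hbm : 0 < b - m := sub_pos.2 hmb
  have hchord : ∀ t ∈ Ioo m b, f t ≤ f b + (b - t) / (b - m) * (f m - f b) := by
    intro t ht
    have key : f (((b - t) / (b - m)) • m + ((t - m) / (b - m)) • b)
        ≤ ((b - t) / (b - m)) • f m + ((t - m) / (b - m)) • f b :=
      hf.2 ⟨ham, hmb.le⟩ ⟨hab, le_rfl⟩ (div_nonneg (by linarith [ht.2]) hbm.le)
        (div_nonneg (by linarith [ht.1]) hbm.le) (by field_simp; ring)
    have hpt : ((b - t) / (b - m)) • m + ((t - m) / (b - m)) • b = t := by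
      simp only [smul_eq_mul]; field_simp; ring
    have hw : (t - m) / (b - m) = 1 - (b - t) / (b - m) := by field_simp; ring
    rw [hpt, smul_eq_mul, smul_eq_mul, hw] at key
    linarith
  have hupper : Tendsto (fun t => f b + (b - t) / (b - m) * (f m - f b)) (𝓝[<] b) (𝓝 (f b)) := by
    have : Continuous (fun t => f b + (b - t) / (b - m) * (f m - f b)) := by fun_prop
    simpa using (this.tendsto b).mono_left nhdsWithin_le_nhds
  have hIoo : Ioo m b ∈ 𝓝[<] b := Ioo_mem_nhdsLT hmb
  refine tendsto_of_tendsto_of_tendsto_of_le_of_le' tendsto_const_nhds hupper ?_ ?_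
  · filter_upwards [hIoo] with t ht using hmin t ⟨ham.trans ht.1, ht.2.le⟩
  · filter_upwards [hIoo] with t ht using hchord t ht

lemma tendsto_slope_of_tendsto_deriv {f : ℝ → ℝ} {a L : ℝ} (hf : ContinuousWithinAt f (Iio a) a)
    (hL : L ≠ 0) (hd : Tendsto (deriv f) (𝓝[<] a) (𝓝 L)) :
    Tendsto (slope f a) (𝓝[<] a) (𝓝 L) := by
  set s := Iio a ∩ {x | deriv f x ≠ 0}
  have hs : s ∈ 𝓝[<] a := inter_mem self_mem_nhdsWithin (hd.eventually_ne hL)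
  have hdiff : DifferentiableOn ℝ f s := fun x hx =>
    (differentiableAt_of_deriv_ne_zero hx.2).differentiableWithinAt
  have := hasDerivWithinAt_Iic_of_tendsto_deriv hdiff (hf.mono inter_subset_left) hs hd
  simpa [hasDerivWithinAt_iff_tendsto_slope] using this

lemma eq_mul_of_map_two_mul {g : ℝ → ℝ} {c : ℝ} (hg : ∀ s, 0 < s → g (2 * s) = 2 * g s)
    (hlim : Tendsto (fun s => g s / s) (𝓝[>] 0) (𝓝 c)) {s : ℝ} (hs : 0 < s) : g s = c * s := by
  have hhalf : ∀ n : ℕ, g (s / 2 ^ n) / (s / 2 ^ n) = g s / s := by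
    intro n
    induction n with
    | zero => simp
    | succ n ih =>
      have hpos : 0 < s / 2 ^ (n + 1) := by positivity
      have h2 : 2 * (s / 2 ^ (n + 1)) = s / 2 ^ n := by rw [pow_succ]; field_simp
      rw [← ih, ← h2, hg _ hpos]
      field_simp
  have hseq : Tendsto (fun n : ℕ => s / 2 ^ n) atTop (𝓝[>] 0) :=
    tendsto_nhdsWithin_iff.2 ⟨tendsto_const_nhds.div_atTop
      (tendsto_pow_atTop_atTop_of_one_lt one_lt_two),
      Eventually.of_forall fun n => mem_Ioi.2 (by positivity)⟩
  have : g s / s = c :=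
    tendsto_nhds_unique tendsto_const_nhds ((hlim.comp hseq).congr hhalf)
  rw [← this]; field_simp

section Generator

variable {φ ψ : ℝ → ℝ}

lemma inverse_lt_one (hφ1 : φ 1 = 0) (hψmem : ∀ s ∈ Ici (0:ℝ), ψ s ∈ Ioc (0:ℝ) 1)
    (hφψ : ∀ s ∈ Ici (0:ℝ), φ (ψ s) = s) {s : ℝ} (hs : 0 < s) : ψ s < 1 := by
  refine (hψmem s hs.le).2.lt_of_ne fun h => hs.ne' ?_
  rw [← hφψ s hs.le, h, hφ1]

lemma tendsto_inverse_nhdsLT_one (hanti : StrictAntiOn φ (Ioc (0:ℝ) 1)) (hφ1 : φ 1 = 0)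
    (hψmem : ∀ s ∈ Ici (0:ℝ), ψ s ∈ Ioc (0:ℝ) 1) (hφψ : ∀ s ∈ Ici (0:ℝ), φ (ψ s) = s) :
    Tendsto ψ (𝓝[>] 0) (𝓝[<] 1) := by
  refine (nhdsLT_basis (1:ℝ)).tendsto_right_iff.2 fun a ha => ?_
  set b := max a (1 / 2)
  have hb : b ∈ Ioc (0:ℝ) 1 := ⟨by positivity, max_le ha.le (by norm_num)⟩
  have hφb : 0 < φ b := hφ1 ▸ hanti hb ⟨one_pos, le_rfl⟩ (max_lt ha (by norm_num))
  filter_upwards [Ioo_mem_nhdsGT hφb] with s hs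
  refine ⟨(le_max_left a (1 / 2)).trans_lt ?_, inverse_lt_one hφ1 hψmem hφψ hs.1⟩
  by_contra! hle
  have := (hanti.le_iff_ge hb (hψmem s hs.1.le)).2 hle
  rw [hφψ s hs.1.le] at this
  exact hs.2.not_ge this

end Generator

lemma tendsto_comp_inverse_div {φ ψ φ' : ℝ → ℝ} {L L' : ℝ} (hL : L ≠ 0) (hφ1 : φ 1 = 0)
    (hφ1' : φ' 1 = 0) (hφψ : ∀ s ∈ Ici (0:ℝ), φ (ψ s) = s)
    (hψ : Tendsto ψ (𝓝[>] 0) (𝓝[<] 1)) (hslope : Tendsto (slope φ 1) (𝓝[<] 1) (𝓝 L))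
    (hslope' : Tendsto (slope φ' 1) (𝓝[<] 1) (𝓝 L')) :
    Tendsto (fun s => φ' (ψ s) / s) (𝓝[>] 0) (𝓝 (L' / L)) := by
  refine ((hslope'.comp hψ).div (hslope.comp hψ) hL).congr' ?_
  filter_upwards [self_mem_nhdsWithin] with s (hs : 0 < s)
  have hφψs := hφψ s hs.le
  have hψs : ψ s - 1 ≠ 0 := fun h => hs.ne' (by rw [← hφψs, sub_eq_zero.1 h, hφ1])
  show slope φ' 1 (ψ s) / slope φ 1 (ψ s) = _
  rw [slope_def_field, slope_def_field, hφ1, hφ1', sub_zero, sub_zero, hφψs]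
  exact div_div_div_cancel_right₀ hψs _ _

theorem archimedean_eq_of_diagonal_eq {φ ψ φ' ψ' : ℝ → ℝ}
    (hconv : ConvexOn ℝ (Ioc (0:ℝ) 1) φ) (hanti : StrictAntiOn φ (Ioc (0:ℝ) 1))
    (hφ1 : φ 1 = 0) (hnn : ∀ t ∈ Ioc (0:ℝ) 1, 0 ≤ φ t)
    (hderiv : ∃ L < (0:ℝ), Tendsto (deriv φ) (𝓝[<] 1) (𝓝 L))
    (hψmem : ∀ s ∈ Ici (0:ℝ), ψ s ∈ Ioc (0:ℝ) 1)
    (hψφ : ∀ t ∈ Ioc (0:ℝ) 1, ψ (φ t) = t) (hφψ : ∀ s ∈ Ici (0:ℝ), φ (ψ s) = s)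
    (hconv' : ConvexOn ℝ (Ioc (0:ℝ) 1) φ') (hφ1' : φ' 1 = 0)
    (hnn' : ∀ t ∈ Ioc (0:ℝ) 1, 0 ≤ φ' t)
    (hderiv' : ∃ L < (0:ℝ), Tendsto (deriv φ') (𝓝[<] 1) (𝓝 L))
    (hψφ' : ∀ t ∈ Ioc (0:ℝ) 1, ψ' (φ' t) = t) (hφψ' : ∀ s ∈ Ici (0:ℝ), φ' (ψ' s) = s)
    (hdiag : ∀ u ∈ Ioo (0:ℝ) 1, ψ (φ u + φ u) = ψ' (φ' u + φ' u)) :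
    ∀ u ∈ Ioc (0:ℝ) 1, ∀ v ∈ Ioc (0:ℝ) 1, ψ (φ u + φ v) = ψ' (φ' u + φ' v) := by
  obtain ⟨L, hL, hdL⟩ := hderiv
  obtain ⟨L', hL', hdL'⟩ := hderiv'
  have hslope := tendsto_slope_of_tendsto_deriv
    (hconv.continuousWithinAt_Iio_of_le_right one_pos fun t ht => hφ1 ▸ hnn t ht) hL.ne hdL
  have hslope' := tendsto_slope_of_tendsto_deriv
    (hconv'.continuousWithinAt_Iio_of_le_right one_pos fun t ht => hφ1' ▸ hnn' t ht) hL'.ne hdL'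
  have hratio := tendsto_comp_inverse_div hL.ne hφ1 hφ1' hφψ
    (tendsto_inverse_nhdsLT_one hanti hφ1 hψmem hφψ) hslope hslope'
  have hdouble : ∀ s, 0 < s → φ' (ψ (2 * s)) = 2 * φ' (ψ s) := by
    intro s hs
    have ht := hψmem s hs.le
    have := hdiag (ψ s) ⟨ht.1, inverse_lt_one hφ1 hψmem hφψ hs⟩
    rw [hφψ s hs.le, ← two_mul, ← two_mul] at this
    rw [this, hφψ' _ (mul_nonneg zero_le_two (hnn' _ ht))]
  have hlin : ∀ s ∈ Ici (0:ℝ), φ' (ψ s) = L' / L * s := by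
    intro s hs
    rcases (mem_Ici.1 hs).eq_or_lt with rfl | hs
    · have hψ0 : ψ 0 = 1 :=
        hanti.injOn (hψmem 0 hs) ⟨one_pos, le_rfl⟩ (by rw [hφψ 0 hs, hφ1])
      rw [hψ0, hφ1', mul_zero]
    · exact eq_mul_of_map_two_mul hdouble hratio hs
  intro u hu v hv
  have hs := add_nonneg (hnn u hu) (hnn v hv)
  calc ψ (φ u + φ v) = ψ' (φ' (ψ (φ u + φ v))) := (hψφ' _ (hψmem _ hs)).symm
    _ = ψ' (φ' u + φ' v) := by
      rw [hlin _ hs, mul_add, ← hlin _ (hnn u hu), ← hlin _ (hnn v hv), hψφ u hu, hψφ v hv]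

theorem stmt5_general (φ ψ φ' ψ' : ℝ → ℝ) (C C' : ℝ → ℝ → ℝ) (F H : ℝ → ℝ)
    -- φ is a strict generator in Ω₁
    (hconv : ConvexOn ℝ (Ioc (0:ℝ) 1) φ) (hanti : StrictAntiOn φ (Ioc (0:ℝ) 1))
    (hφ1 : φ 1 = 0) (hnn : ∀ t ∈ Ioc (0:ℝ) 1, 0 ≤ φ t)
    (hderiv : ∃ L < (0:ℝ), Tendsto (deriv φ) (nhdsWithin 1 (Iio (1:ℝ))) (nhds L))
    (hψmem : ∀ s ∈ Ici (0:ℝ), ψ s ∈ Ioc (0:ℝ) 1)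
    (hψφ : ∀ t ∈ Ioc (0:ℝ) 1, ψ (φ t) = t) (hφψ : ∀ s ∈ Ici (0:ℝ), φ (ψ s) = s)
    (hC : ∀ u ∈ Ioc (0:ℝ) 1, ∀ v ∈ Ioc (0:ℝ) 1, C u v = ψ (φ u + φ v))
    (hC0x : ∀ v, C 0 v = 0) (hC0y : ∀ u, C u 0 = 0)
    -- φ' is a strict generator in Ω₁
    (hconv' : ConvexOn ℝ (Ioc (0:ℝ) 1) φ')
    (hφ1' : φ' 1 = 0) (hnn' : ∀ t ∈ Ioc (0:ℝ) 1, 0 ≤ φ' t)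
    (hderiv' : ∃ L < (0:ℝ), Tendsto (deriv φ') (nhdsWithin 1 (Iio (1:ℝ))) (nhds L))
    (hψφ' : ∀ t ∈ Ioc (0:ℝ) 1, ψ' (φ' t) = t) (hφψ' : ∀ s ∈ Ici (0:ℝ), φ' (ψ' s) = s)
    (hC' : ∀ u ∈ Ioc (0:ℝ) 1, ∀ v ∈ Ioc (0:ℝ) 1, C' u v = ψ' (φ' u + φ' v))
    (hC0x' : ∀ v, C' 0 v = 0) (hC0y' : ∀ u, C' u 0 = 0)
    -- F is a known continuous, strictly increasing distribution function
    (hFc : Continuous F)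
    (hF0 : Tendsto F atBot (nhds 0)) (hF1 : Tendsto F atTop (nhds 1))
    -- both copulas give rise to the same distribution function H of Z = min(X,Y)
    (hH : ∀ z, H z = 2 * F z - C (F z) (F z))
    (hH' : ∀ z, H z = 2 * F z - C' (F z) (F z)) :
    ∀ u ∈ Icc (0:ℝ) 1, ∀ v ∈ Icc (0:ℝ) 1, C u v = C' u v := by
  have hdiag : ∀ u ∈ Ioo (0:ℝ) 1, ψ (φ u + φ u) = ψ' (φ' u + φ' u) := by
    intro u hu
    obtain ⟨z, rfl⟩ : u ∈ range F := mem_range_of_exists_le_of_exists_ge hFc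
      (hF0.eventually (eventually_le_nhds hu.1)).exists
      (hF1.eventually (eventually_ge_nhds hu.2)).exists
    have hu' : F z ∈ Ioc (0:ℝ) 1 := ⟨hu.1, hu.2.le⟩
    rw [← hC _ hu' _ hu', ← hC' _ hu' _ hu']
    linarith [hH z, hH' z]
  intro u hu v hv
  rcases hu.1.eq_or_lt with rfl | hu0
  · rw [hC0x, hC0x']
  rcases hv.1.eq_or_lt with rfl | hv0
  · rw [hC0y, hC0y']
  have hu' : u ∈ Ioc (0:ℝ) 1 := ⟨hu0, hu.2⟩
  have hv' : v ∈ Ioc (0:ℝ) 1 := ⟨hv0, hv.2⟩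
  rw [hC u hu' v hv', hC' u hu' v hv']
  exact archimedean_eq_of_diagonal_eq hconv hanti hφ1 hnn hderiv hψmem hψφ hφψ hconv' hφ1' hnn'
    hderiv' hψφ' hφψ' hdiag u hu' v hv'

/-- Identifiability of strict Archimedean copulas with generators in
`Ω₁ = {φ : φ(0) = ∞, lim_{t↑1} φ'(t) < 0}` when the two margins are equal, continuous,
strictly increasing and known: if the copulas generated by `φ` and `φ'` produce the same
distribution function `H` of `Z = min(X,Y)` (via `H(z) = 2F(z) - C(F(z),F(z))`), then the
two copulas coincide. -/
theorem stmt5 (φ ψ φ' ψ' : ℝ → ℝ) (C C' : ℝ → ℝ → ℝ) (F H : ℝ → ℝ)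
    -- φ is a strict generator in Ω₁
    (hconv : ConvexOn ℝ (Ioc (0:ℝ) 1) φ) (hanti : StrictAntiOn φ (Ioc (0:ℝ) 1))
    (hφ1 : φ 1 = 0) (hnn : ∀ t ∈ Ioc (0:ℝ) 1, 0 ≤ φ t)
    (hstrict : Tendsto φ (nhdsWithin 0 (Ioi (0:ℝ))) atTop)
    (hderiv : ∃ L < (0:ℝ), Tendsto (deriv φ) (nhdsWithin 1 (Iio (1:ℝ))) (nhds L))
    (hψmem : ∀ s ∈ Ici (0:ℝ), ψ s ∈ Ioc (0:ℝ) 1)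
    (hψφ : ∀ t ∈ Ioc (0:ℝ) 1, ψ (φ t) = t) (hφψ : ∀ s ∈ Ici (0:ℝ), φ (ψ s) = s)
    (hC : ∀ u ∈ Ioc (0:ℝ) 1, ∀ v ∈ Ioc (0:ℝ) 1, C u v = ψ (φ u + φ v))
    (hC0x : ∀ v, C 0 v = 0) (hC0y : ∀ u, C u 0 = 0)
    -- φ' is a strict generator in Ω₁
    (hconv' : ConvexOn ℝ (Ioc (0:ℝ) 1) φ') (hanti' : StrictAntiOn φ' (Ioc (0:ℝ) 1))
    (hφ1' : φ' 1 = 0) (hnn' : ∀ t ∈ Ioc (0:ℝ) 1, 0 ≤ φ' t)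
    (hstrict' : Tendsto φ' (nhdsWithin 0 (Ioi (0:ℝ))) atTop)
    (hderiv' : ∃ L < (0:ℝ), Tendsto (deriv φ') (nhdsWithin 1 (Iio (1:ℝ))) (nhds L))
    (hψmem' : ∀ s ∈ Ici (0:ℝ), ψ' s ∈ Ioc (0:ℝ) 1)
    (hψφ' : ∀ t ∈ Ioc (0:ℝ) 1, ψ' (φ' t) = t) (hφψ' : ∀ s ∈ Ici (0:ℝ), φ' (ψ' s) = s)
    (hC' : ∀ u ∈ Ioc (0:ℝ) 1, ∀ v ∈ Ioc (0:ℝ) 1, C' u v = ψ' (φ' u + φ' v))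
    (hC0x' : ∀ v, C' 0 v = 0) (hC0y' : ∀ u, C' u 0 = 0)
    -- F is a known continuous, strictly increasing distribution function
    (hFc : Continuous F) (hFm : StrictMono F)
    (hF0 : Tendsto F atBot (nhds 0)) (hF1 : Tendsto F atTop (nhds 1))
    -- both copulas give rise to the same distribution function H of Z = min(X,Y)
    (hH : ∀ z, H z = 2 * F z - C (F z) (F z))
    (hH' : ∀ z, H z = 2 * F z - C' (F z) (F z)) :
    ∀ u ∈ Icc (0:ℝ) 1, ∀ v ∈ Icc (0:ℝ) 1, C u v = C' u v :=
  stmt5_general φ ψ φ' ψ' C C' F H hconv hanti hφ1 hnn hderiv hψmem hψφ hφψ hC hC0x hC0y hconv' hφ1'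
    hnn' hderiv' hψφ' hφψ' hC' hC0x' hC0y' hFc hF0 hF1 hH hH'
end

section
/- Let $\varphi_\theta\in\Omega$ be a generator with derivative $\varphi_\theta'$, $H$ a continuous strictly increasing distribution function on $(0,\infty)$ decomposed as $H(s)=H(s,0)+H(s,1)$, and define for $z\in(0,1)$: $\zeta_x(z)=\varphi_\theta^{[-1]}\big(-\int_{H^{-1}(z)}^\infty \varphi_\theta'(H(s))\,dH(s,1)\big)$ and $\zeta_y(z)=\varphi_\theta^{[-1]}\big(-\int_{H^{-1}(z)}^\infty \varphi_\theta'(H(s))\,dH(s,0)\big)$. Then $\varphi_\theta(\zeta_x(z))+\varphi_\theta(\zeta_y(z))=\varphi_\theta(z)$, i.e. the Archimedean copula generated by $\varphi_\theta$ satisfies $C_\theta(\zeta_x(z),\zeta_y(z))=z$, provided both integrals are at most $\varphi_\theta(0)$. -/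
/-!
Writing `ν = ν₀ + ν₁`, the decomposition says that `H` is the distribution function of the
probability measure `ν`. Since `H` is continuous and strictly increasing beyond `a = H⁻¹(z)`, it
pushes `ν` restricted to `(a, ∞)` forward to Lebesgue measure on `(z, 1]` (probability integral
transform), so `-∫_{(a,∞)} φ'(H) dν = -∫_z^1 φ' = φ(z)`. The two integrals against `ν₁` and `ν₀`
are nonnegative (`φ` is decreasing) and add up to `φ(z) ≤ φ(0)`, hence lie in the range where the
pseudo-inverse inverts `φ`.
-/

open Set MeasureTheory Filter ProbabilityTheory Topology

theorem isProbabilityMeasure_of_tendsto_toReal_Iic {ν : Measure ℝ} [IsFiniteMeasure ν]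
    (h : Tendsto (fun s => (ν (Iic s)).toReal) atTop (𝓝 1)) : IsProbabilityMeasure ν :=
  ⟨(ENNReal.toReal_eq_one_iff _).1 <| tendsto_nhds_unique
    ((ENNReal.tendsto_toReal (measure_ne_top ν univ)).comp (tendsto_measure_Iic_atTop ν)) h⟩

theorem measure_Ioi_eq_ofReal_one_sub_cdf (ν : Measure ℝ) [IsProbabilityMeasure ν] (a : ℝ) :
    ν (Ioi a) = ENNReal.ofReal (1 - cdf ν a) := by
  rw [← compl_Iic, prob_compl_eq_one_sub measurableSet_Iic, ← ofReal_cdf, ← ENNReal.ofReal_one,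
    ENNReal.ofReal_sub _ (cdf_nonneg ν a)]

theorem measure_Ioc_eq_ofReal_cdf_sub (ν : Measure ℝ) [IsProbabilityMeasure ν] (a b : ℝ) :
    ν (Ioc a b) = ENNReal.ofReal (cdf ν b - cdf ν a) := by
  nth_rewrite 1 [← measure_cdf ν]
  exact StieltjesFunction.measure_Ioc _ a b

theorem exists_ge_cdf_eq {ν : Measure ℝ} {a b : ℝ} (hcont : ContinuousOn (cdf ν) (Ici a))
    (hb : b ∈ Ico (cdf ν a) 1) : ∃ c, a ≤ c ∧ cdf ν c = b := by
  obtain ⟨M, hbM, haM⟩ := (((tendsto_cdf_atTop ν).eventually (eventually_gt_nhds hb.2)).and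
    (eventually_ge_atTop a)).exists
  obtain ⟨c, hc, hcb⟩ :=
    intermediate_value_Icc haM (hcont.mono Icc_subset_Ici_self) ⟨hb.1, hbM.le⟩
  exact ⟨c, hc.1, hcb⟩

theorem mapsTo_cdf_Ioi {ν : Measure ℝ} {a : ℝ} (hmono : StrictMonoOn (cdf ν) (Ici a)) :
    MapsTo (cdf ν) (Ioi a) (Ioo (cdf ν a) 1) := fun s hs => by
  have has : a ≤ s := le_of_lt hs
  exact ⟨hmono self_mem_Ici has hs,
    (hmono has (mem_Ici.2 (has.trans (by linarith))) (lt_add_one s)).trans_le (cdf_le_one ν _)⟩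

theorem map_cdf_restrict_Ioi (ν : Measure ℝ) [IsProbabilityMeasure ν] {a : ℝ}
    (hcont : ContinuousOn (cdf ν) (Ici a)) (hmono : StrictMonoOn (cdf ν) (Ici a)) :
    (ν.restrict (Ioi a)).map (cdf ν) = volume.restrict (Ioc (cdf ν a) 1) := by
  have hmeas : Measurable (cdf ν) := (monotone_cdf ν).measurable
  refine Measure.ext_of_Iic _ _ fun b => ?_
  rw [Measure.map_apply hmeas measurableSet_Iic, Measure.restrict_apply (hmeas measurableSet_Iic),
    Measure.restrict_apply measurableSet_Iic, inter_comm (Iic b), Ioc_inter_Iic, Real.volume_Ioc]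
  rcases lt_or_ge b (cdf ν a) with hba | hab
  · have hempty : cdf ν ⁻¹' Iic b ∩ Ioi a = ∅ := by
      refine eq_empty_of_forall_notMem fun s ⟨hsb, has⟩ => ?_
      exact absurd hsb (not_le.2 (hba.trans (mapsTo_cdf_Ioi hmono has).1))
    rw [hempty, measure_empty, ENNReal.ofReal_of_nonpos (by linarith [min_le_right 1 b])]
  rcases lt_or_ge b 1 with hb1 | hb1
  · obtain ⟨c, hac, rfl⟩ := exists_ge_cdf_eq hcont ⟨hab, hb1⟩
    have hset : cdf ν ⁻¹' Iic (cdf ν c) ∩ Ioi a = Ioc a c := by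
      ext s
      refine ⟨fun ⟨hsc, has⟩ => ⟨has, ?_⟩, fun ⟨has, hsc⟩ => ⟨monotone_cdf ν hsc, has⟩⟩
      exact (hmono.le_iff_le (mem_Ici.2 has.le) (mem_Ici.2 hac)).1 hsc
    rw [hset, measure_Ioc_eq_ofReal_cdf_sub, min_eq_right hb1.le]
  · have hset : cdf ν ⁻¹' Iic b ∩ Ioi a = Ioi a := by
      rw [inter_eq_right]
      exact fun s _ => (cdf_le_one ν s).trans hb1
    rw [hset, measure_Ioi_eq_ofReal_one_sub_cdf, min_eq_left hb1]

theorem integrableOn_comp_cdf_Ioi {E : Type*} [NormedAddCommGroup E] (ν : Measure ℝ)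
    [IsProbabilityMeasure ν] {a : ℝ} (hcont : ContinuousOn (cdf ν) (Ici a))
    (hmono : StrictMonoOn (cdf ν) (Ici a)) {f : ℝ → E} (hf : IntegrableOn f (Ioc (cdf ν a) 1)) :
    IntegrableOn (fun s => f (cdf ν s)) (Ioi a) ν := by
  rw [IntegrableOn, ← map_cdf_restrict_Ioi ν hcont hmono] at hf
  exact hf.comp_measurable (monotone_cdf ν).measurable

theorem setIntegral_comp_cdf_Ioi {E : Type*} [NormedAddCommGroup E] [NormedSpace ℝ E]
    (ν : Measure ℝ) [IsProbabilityMeasure ν] {a : ℝ} (hcont : ContinuousOn (cdf ν) (Ici a))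
    (hmono : StrictMonoOn (cdf ν) (Ici a)) {f : ℝ → E}
    (hf : AEStronglyMeasurable f (volume.restrict (Ioc (cdf ν a) 1))) :
    ∫ s in Ioi a, f (cdf ν s) ∂ν = ∫ u in Ioc (cdf ν a) 1, f u := by
  rw [← map_cdf_restrict_Ioi ν hcont hmono] at hf ⊢
  exact (integral_map (monotone_cdf ν).measurable.aemeasurable hf).symm

theorem integrableOn_deriv_of_nonpos {g g' : ℝ → ℝ} {x y : ℝ} (hcont : ContinuousOn g (Icc x y))
    (hderiv : ∀ t ∈ Ioo x y, HasDerivAt g (g' t) t) (hg' : ∀ t ∈ Ioo x y, g' t ≤ 0) :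
    IntegrableOn g' (Ioc x y) := by
  simpa using (intervalIntegral.integrableOn_deriv_of_nonneg hcont.neg
    (fun t ht => (hderiv t ht).neg) fun t ht => neg_nonneg.2 (hg' t ht)).neg

theorem setIntegral_Ioc_deriv_of_nonpos {g g' : ℝ → ℝ} {x y : ℝ} (hxy : x ≤ y)
    (hcont : ContinuousOn g (Icc x y)) (hderiv : ∀ t ∈ Ioo x y, HasDerivAt g (g' t) t)
    (hg' : ∀ t ∈ Ioo x y, g' t ≤ 0) :
    ∫ t in Ioc x y, g' t = g y - g x := by
  rw [← intervalIntegral.integral_of_le hxy]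
  refine intervalIntegral.integral_eq_sub_of_hasDerivAt_of_le hxy hcont hderiv ?_
  exact (intervalIntegrable_iff_integrableOn_Ioc_of_le hxy).2
    (integrableOn_deriv_of_nonpos hcont hderiv hg')

theorem HasDerivAt.nonpos_of_antitoneOn_of_isOpen {g : ℝ → ℝ} {g' x : ℝ} {s : Set ℝ}
    (hd : HasDerivAt g g' x) (hs : IsOpen s) (hx : x ∈ s) (hg : AntitoneOn g s) : g' ≤ 0 :=
  hd.hasDerivWithinAt.derivWithin (hs.uniqueDiffWithinAt hx) ▸ hg.derivWithin_nonpos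

theorem pseudoInv_level_of_add_eq {φ ψ : ℝ → ℝ} (hanti : StrictAntiOn φ (Icc 0 1))
    (hφ1 : φ 1 = 0) (hψ : ∀ s ∈ Icc 0 (φ 0), φ (ψ s) = s ∧ ψ s ∈ Icc 0 1) {x y z : ℝ}
    (hx : 0 ≤ x) (hy : 0 ≤ y) (hz : z ∈ Icc 0 1) (hxy : x + y = φ z) :
    φ (ψ x) + φ (ψ y) = φ z ∧ ψ (φ (ψ x) + φ (ψ y)) = z := by
  have hφz : φ z ∈ Icc 0 (φ 0) :=
    ⟨hφ1 ▸ hanti.antitoneOn hz ⟨zero_le_one, le_rfl⟩ hz.2,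
      hanti.antitoneOn ⟨le_rfl, zero_le_one⟩ hz hz.1⟩
  have hlevel : φ (ψ x) + φ (ψ y) = φ z := by
    rw [(hψ x ⟨hx, by linarith [hφz.2]⟩).1, (hψ y ⟨hy, by linarith [hφz.2]⟩).1, hxy]
  refine ⟨hlevel, ?_⟩
  rw [hlevel]
  exact hanti.injOn (hψ _ hφz).2 hz (hψ _ hφz).1

theorem stmt13_general (φ φd ψp : ℝ → ℝ) (H H0 H1 : ℝ → ℝ) (ν0 ν1 : Measure ℝ)
    [IsFiniteMeasure ν0] [IsFiniteMeasure ν1]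
    (hφc : ContinuousOn φ (Icc (0:ℝ) 1))
    (hanti : StrictAntiOn φ (Icc (0:ℝ) 1))
    (hφ1 : φ 1 = 0)
    (hderiv : ∀ t ∈ Ioo (0:ℝ) 1, HasDerivAt φ (φd t) t)
    -- pseudo-inverse of φ
    (hψp : ∀ s ∈ Icc (0:ℝ) (φ 0), φ (ψp s) = s ∧ ψp s ∈ Icc (0:ℝ) 1)
    -- sub-distribution functions and their measures
    (hH0 : ∀ s, H0 s = (ν0 (Iic s)).toReal)
    (hH1 : ∀ s, H1 s = (ν1 (Iic s)).toReal)
    (hsum : ∀ s, H0 s + H1 s = H s)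
    (hHc : Continuous H) (hHm : StrictMonoOn H (Ici (0:ℝ)))
    (hHone : Tendsto H atTop (nhds 1))
    -- z and a = H⁻¹(z)
    (z a : ℝ) (hz : z ∈ Ioo (0:ℝ) 1) (ha : 0 < a) (hHa : H a = z) :
    φ (ψp (-∫ s in Ioi a, φd (H s) ∂ν1)) + φ (ψp (-∫ s in Ioi a, φd (H s) ∂ν0)) = φ z ∧
    ψp (φ (ψp (-∫ s in Ioi a, φd (H s) ∂ν1)) + φ (ψp (-∫ s in Ioi a, φd (H s) ∂ν0)))
      = z := by
  set ν := ν0 + ν1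
  have hHν : ∀ s, H s = (ν (Iic s)).toReal := fun s => by
    rw [← hsum, hH0, hH1, Measure.add_apply,
      ENNReal.toReal_add (measure_ne_top _ _) (measure_ne_top _ _)]
  have : IsProbabilityMeasure ν :=
    isProbabilityMeasure_of_tendsto_toReal_Iic ((funext hHν : H = _) ▸ hHone)
  obtain rfl : H = cdf ν := funext fun s => by rw [hHν, cdf_eq_real, measureReal_def]
  subst hHa
  have hmono : StrictMonoOn (cdf ν) (Ici a) := hHm.mono (Ici_subset_Ici.2 ha.le)
  have hIoo : Ioo (cdf ν a) 1 ⊆ Ioo 0 1 := Ioo_subset_Ioo_left hz.1.le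
  have hφd : ∀ t ∈ Ioo 0 1, φd t ≤ 0 := fun t ht =>
    (hderiv t ht).nonpos_of_antitoneOn_of_isOpen isOpen_Ioo ht
      (hanti.antitoneOn.mono Ioo_subset_Icc_self)
  have hφc' : ContinuousOn φ (Icc (cdf ν a) 1) := hφc.mono (Icc_subset_Icc_left hz.1.le)
  have hderiv' : ∀ t ∈ Ioo (cdf ν a) 1, HasDerivAt φ (φd t) t := fun t ht => hderiv t (hIoo ht)
  have hφd' : ∀ t ∈ Ioo (cdf ν a) 1, φd t ≤ 0 := fun t ht => hφd t (hIoo ht)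
  have hint := integrableOn_deriv_of_nonpos hφc' hderiv' hφd'
  have htotal : ∫ s in Ioi a, φd (cdf ν s) ∂ν = -φ (cdf ν a) := by
    rw [setIntegral_comp_cdf_Ioi ν hHc.continuousOn hmono hint.aestronglyMeasurable,
      setIntegral_Ioc_deriv_of_nonpos hz.2.le hφc' hderiv' hφd', hφ1, zero_sub]
  have hintν : Integrable (fun s => φd (cdf ν s)) (ν0.restrict (Ioi a) + ν1.restrict (Ioi a)) :=
    Measure.restrict_add ν0 ν1 (Ioi a) ▸ integrableOn_comp_cdf_Ioi ν hHc.continuousOn hmono hint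
  have hsplit : ∫ s in Ioi a, φd (cdf ν s) ∂ν0 + ∫ s in Ioi a, φd (cdf ν s) ∂ν1
      = -φ (cdf ν a) := by
    rw [← htotal, Measure.restrict_add,
      integral_add_measure hintν.left_of_add_measure hintν.right_of_add_measure]
  have hnonpos : ∀ μ : Measure ℝ, ∫ s in Ioi a, φd (cdf ν s) ∂μ ≤ 0 := fun μ =>
    setIntegral_nonpos measurableSet_Ioi fun s hs => hφd _ (hIoo (mapsTo_cdf_Ioi hmono hs))
  exact pseudoInv_level_of_add_eq hanti hφ1 hψp (neg_nonneg.2 (hnonpos ν1))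
    (neg_nonneg.2 (hnonpos ν0)) (Ioo_subset_Icc_self hz) (by linarith)

/-- For a generator `φ_θ` with derivative `φ_θ'`, a continuous strictly increasing
distribution function `H` on `(0,∞)` decomposed as `H = H(·,0) + H(·,1)` (with associated
sub-distribution measures `ν₀, ν₁`), the point
`(ζ_x(z), ζ_y(z)) = (φ^{[-1]}(-∫_{H⁻¹(z)}^∞ φ'(H(s)) dH(s,1)), φ^{[-1]}(-∫_{H⁻¹(z)}^∞ φ'(H(s)) dH(s,0)))`
lies on the level curve of level `z` of the Archimedean copula generated by `φ_θ`:
`φ(ζ_x(z)) + φ(ζ_y(z)) = φ(z)` and hence `C_θ(ζ_x(z), ζ_y(z)) = z`, provided both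
integrals are at most `φ(0)`. -/
theorem stmt13 (φ φd ψp : ℝ → ℝ) (H H0 H1 : ℝ → ℝ) (ν0 ν1 : Measure ℝ)
    [IsFiniteMeasure ν0] [IsFiniteMeasure ν1]
    (hφc : ContinuousOn φ (Icc (0:ℝ) 1))
    (hconv : ConvexOn ℝ (Icc (0:ℝ) 1) φ)
    (hanti : StrictAntiOn φ (Icc (0:ℝ) 1))
    (hφ1 : φ 1 = 0) (hnn : ∀ t ∈ Icc (0:ℝ) 1, 0 ≤ φ t)
    (hderiv : ∀ t ∈ Ioo (0:ℝ) 1, HasDerivAt φ (φd t) t)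
    -- pseudo-inverse of φ
    (hψp : ∀ s ∈ Icc (0:ℝ) (φ 0), φ (ψp s) = s ∧ ψp s ∈ Icc (0:ℝ) 1)
    (hψp0 : ∀ s : ℝ, φ 0 < s → ψp s = 0)
    -- sub-distribution functions and their measures
    (hH0 : ∀ s, H0 s = (ν0 (Iic s)).toReal)
    (hH1 : ∀ s, H1 s = (ν1 (Iic s)).toReal)
    (hsum : ∀ s, H0 s + H1 s = H s)
    (hHc : Continuous H) (hHm : StrictMonoOn H (Ici (0:ℝ)))
    (hHzero : H 0 = 0) (hHone : Tendsto H atTop (nhds 1))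
    -- z and a = H⁻¹(z)
    (z a : ℝ) (hz : z ∈ Ioo (0:ℝ) 1) (ha : 0 < a) (hHa : H a = z)
    (hint1 : IntegrableOn (fun s => φd (H s)) (Ioi a) ν1)
    (hint0 : IntegrableOn (fun s => φd (H s)) (Ioi a) ν0)
    (hle1 : -∫ s in Ioi a, φd (H s) ∂ν1 ≤ φ 0)
    (hle0 : -∫ s in Ioi a, φd (H s) ∂ν0 ≤ φ 0) :
    φ (ψp (-∫ s in Ioi a, φd (H s) ∂ν1)) + φ (ψp (-∫ s in Ioi a, φd (H s) ∂ν0)) = φ z ∧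
    ψp (φ (ψp (-∫ s in Ioi a, φd (H s) ∂ν1)) + φ (ψp (-∫ s in Ioi a, φd (H s) ∂ν0)))
      = z :=
  stmt13_general φ φd ψp H H0 H1 ν0 ν1 hφc hanti hφ1 hderiv hψp hH0 hH1 hsum hHc hHm hHone z a hz ha
    hHa
end

section
/- Two copulas $C, C'$ with densities, combined with the same known differentiable margins $F_X, F_Y$, induce the same joint distribution of $(Z,\Delta)=(\min(X,Y),\mathbf{1}_{X\le Y})$ if and only if for all $z\in\mathbb{R}$ both $\frac{\partial}{\partial x}C(F_X(x),F_Y(z))|_{x=z} = \frac{\partial}{\partial x}C'(F_X(x),F_Y(z))|_{x=z}$ and $\frac{\partial}{\partial y}C(F_X(z),F_Y(y))|_{y=z} = \frac{\partial}{\partial y}C'(F_X(z),F_Y(y))|_{y=z}$. -/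
/-!
Put `A(t) = P(X ≤ t, X ≤ Y)`. For `a ≤ b`,
`{a < X ≤ b, b < Y} ⊆ {a < X ≤ b, X ≤ Y} ⊆ {a < X ≤ b, a < Y}`, and
`P(X ≤ x, y < Y) = F_X(x) - C(F_X(x), F_Y(y))`, so the increments of `A` are squeezed between
increments of `x ↦ F_X(x) - C(F_X(x), F_Y(y))` at `y = b` and at `y = a`. The two bounds differ
by a mixed second difference of `C(F_X(·), F_Y(·))`, which is `o(b - a)` because `C` has a
continuous density on `[0,1]²`. Hence `A'(z) = f_X(z) - ∂ₓ C(F_X(x), F_Y(z))|_{x=z}`, and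
symmetrically for `P(Y ≤ t, Y < X)`. Two such sub-distribution functions vanish at `-∞`, so they
coincide iff their derivatives do.
-/

open Set MeasureTheory intervalIntegral Filter Topology Asymptotics Function

def HasContinuousDensity (C c : ℝ → ℝ → ℝ) : Prop :=
  Continuous (uncurry c) ∧ ∀ a b, C a b = ∫ u in (0:ℝ)..a, ∫ v in (0:ℝ)..b, c u v

namespace HasContinuousDensity

variable {C c : ℝ → ℝ → ℝ}

theorem swap (h : HasContinuousDensity C c) :
    HasContinuousDensity (Function.swap C) (Function.swap c) := by
  refine ⟨h.1.comp continuous_swap, fun a b => ?_⟩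
  rw [Function.swap, h.2, intervalIntegral_intervalIntegral_swap]
  exact (h.1.continuousOn.integrableOn_compact (isCompact_uIcc.prod isCompact_uIcc)).mono_set
    (prod_mono uIoc_subset_uIcc uIoc_subset_uIcc)

theorem continuous_integral_snd (h : HasContinuousDensity C c) (b : ℝ) :
    Continuous fun u => ∫ v in (0:ℝ)..b, c u v :=
  continuous_parametric_intervalIntegral_of_continuous' h.1 0 b

theorem hasDerivAt_fst (h : HasContinuousDensity C c) (a b : ℝ) :
    HasDerivAt (C · b) (∫ v in (0:ℝ)..b, c a v) a := by
  rw [show (C · b) = _ from funext fun x => h.2 x b]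
  exact ((h.continuous_integral_snd b).integral_hasStrictDerivAt 0 a).hasDerivAt

theorem rectangle_sub_eq_integral (h : HasContinuousDensity C c) (a a' b b' : ℝ) :
    C a' b' - C a b' - (C a' b - C a b) = ∫ u in a..a', ∫ v in b..b', c u v := by
  have hint : ∀ s p q, IntervalIntegrable (fun u => ∫ v in (0:ℝ)..s, c u v) volume p q :=
    fun s p q => (h.continuous_integral_snd s).intervalIntegrable p q
  simp only [h.2]
  rw [integral_interval_sub_left (hint _ _ _) (hint _ _ _),
    integral_interval_sub_left (hint _ _ _) (hint _ _ _), ← integral_sub (hint _ _ _) (hint _ _ _)]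
  refine integral_congr fun u _ => ?_
  exact integral_interval_sub_left ((h.1.uncurry_left u).intervalIntegrable _ _)
    ((h.1.uncurry_left u).intervalIntegrable _ _)

end HasContinuousDensity

theorem norm_integral_integral_le_of_norm_le_const {c : ℝ → ℝ → ℝ} {a a' b b' M : ℝ}
    (hM : ∀ u ∈ uIcc a a', ∀ v ∈ uIcc b b', ‖c u v‖ ≤ M) :
    ‖∫ u in a..a', ∫ v in b..b', c u v‖ ≤ M * |b' - b| * |a' - a| :=
  norm_integral_le_of_norm_le_const fun u hu =>
    norm_integral_le_of_norm_le_const fun v hv =>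
      hM u (uIoc_subset_uIcc hu) v (uIoc_subset_uIcc hv)

theorem HasContinuousDensity.isLittleO_rectangle {C c : ℝ → ℝ → ℝ}
    (h : HasContinuousDensity C c) {F G : ℝ → ℝ} {z f : ℝ}
    (hF01 : ∀ x, F x ∈ Icc 0 1) (hG01 : ∀ y, G y ∈ Icc 0 1)
    (hF : HasDerivAt F f z) (hG : ContinuousAt G z) :
    (fun w => C (F w) (G w) - C (F z) (G w) - (C (F w) (G z) - C (F z) (G z)))
      =o[𝓝 z] (· - z) := by
  obtain ⟨M, hM⟩ := (isCompact_Icc.prod isCompact_Icc).exists_bound_of_continuousOn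
    (s := Icc (0:ℝ) 1 ×ˢ Icc (0:ℝ) 1) h.1.continuousOn
  have hbound : ∀ w, ‖C (F w) (G w) - C (F z) (G w) - (C (F w) (G z) - C (F z) (G z))‖
      ≤ M * ‖(G w - G z) * (F w - F z)‖ := fun w => by
    rw [h.rectangle_sub_eq_integral, norm_mul, Real.norm_eq_abs, Real.norm_eq_abs, ← mul_assoc]
    exact norm_integral_integral_le_of_norm_le_const fun u hu v hv =>
      hM (u, v) ⟨uIcc_subset_Icc (hF01 z) (hF01 w) hu, uIcc_subset_Icc (hG01 z) (hG01 w) hv⟩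
  have hGo : (fun w => G w - G z) =o[𝓝 z] (fun _ => (1:ℝ)) :=
    (isLittleO_one_iff ℝ).2 (tendsto_sub_nhds_zero_iff.2 hG)
  refine (IsBigO.of_bound M (Eventually.of_forall hbound)).trans_isLittleO ?_
  simpa only [one_mul] using hGo.mul_isBigO hF.isBigO_sub

theorem hasDerivAt_of_increment_bounds {A : ℝ → ℝ} {K : ℝ → ℝ → ℝ} {z L : ℝ}
    (hbound : ∀ a b, a ≤ b → K b b - K a b ≤ A b - A a ∧ A b - A a ≤ K b a - K a a)
    (hK : HasDerivAt (K · z) L z)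
    (hmix : (fun w => K w w - K z w - (K w z - K z z)) =o[𝓝 z] (· - z)) :
    HasDerivAt A L z := by
  have hsandwich : ∀ w, K w w - K z w - (K w z - K z z) ≤ A w - A z - (K w z - K z z) ∧
      A w - A z - (K w z - K z z) ≤ 0 := by
    intro w
    rcases le_total z w with hzw | hwz
    · obtain ⟨h₁, h₂⟩ := hbound z w hzw
      constructor <;> linarith
    · obtain ⟨h₁, h₂⟩ := hbound w z hwz
      constructor <;> linarith
  have hclose : ∀ w, ‖A w - A z - (K w z - K z z)‖ ≤ ‖K w w - K z w - (K w z - K z z)‖ := by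
    intro w
    obtain ⟨h₁, h₂⟩ := hsandwich w
    rw [Real.norm_eq_abs, Real.norm_eq_abs, abs_of_nonpos h₂, abs_of_nonpos (h₁.trans h₂)]
    linarith
  rw [hasDerivAt_iff_isLittleO]
  refine (((isBigO_of_le _ hclose).trans_isLittleO hmix).add
    (hasDerivAt_iff_isLittleO.1 hK)).congr_left fun w => ?_
  ring

section Increments

variable {Ω : Type*} [MeasurableSpace Ω] {μ : Measure Ω} [IsFiniteMeasure μ] {U V : Ω → ℝ}

theorem measureReal_preimage_Iic_inter_sub {T : Set Ω} (hU : Measurable U)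
    (hT : MeasurableSet T) {a b : ℝ} (hab : a ≤ b) :
    μ.real (U ⁻¹' Iic b ∩ T) - μ.real (U ⁻¹' Iic a ∩ T) = μ.real (U ⁻¹' Ioc a b ∩ T) := by
  rw [← measureReal_sdiff (inter_subset_inter_left _ (preimage_mono (Iic_subset_Iic.2 hab)))
    ((hU measurableSet_Iic).inter hT)]
  congr 1
  ext ω
  simp only [Set.mem_sdiff, mem_inter_iff, mem_preimage, mem_Iic, mem_Ioc, ← not_le]
  tauto

theorem measureReal_preimage_Iic_inter_Ioi (hU : Measurable U) (hV : Measurable V) (x y : ℝ) :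
    μ.real (U ⁻¹' Iic x ∩ V ⁻¹' Ioi y)
      = μ.real (U ⁻¹' Iic x) - μ.real (U ⁻¹' Iic x ∩ V ⁻¹' Iic y) := by
  rw [← measureReal_sdiff inter_subset_left ((hU measurableSet_Iic).inter (hV measurableSet_Iic)),
    sdiff_self_inter, sdiff_eq, ← preimage_compl, compl_Iic]

end Increments

section Copula

variable {Ω : Type*} [MeasurableSpace Ω] {μ : Measure Ω} [IsProbabilityMeasure μ]
  {C c : ℝ → ℝ → ℝ}

theorem hasDerivAt_measureReal_preimage_Iic_inter {U V : Ω → ℝ} {E : Set Ω} {F G : ℝ → ℝ}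
    (hU : Measurable U) (hV : Measurable V) (hE : MeasurableSet E)
    (hlt : {ω | U ω < V ω} ⊆ E) (hle : E ⊆ {ω | U ω ≤ V ω}) (hC : HasContinuousDensity C c)
    (hF : ∀ x, F x = μ.real (U ⁻¹' Iic x)) (hG : ∀ y, G y = μ.real (V ⁻¹' Iic y))
    (hjoint : ∀ x y, μ.real (U ⁻¹' Iic x ∩ V ⁻¹' Iic y) = C (F x) (G y))
    {z f : ℝ} (hFz : HasDerivAt F f z) (hGz : ContinuousAt G z) :
    HasDerivAt (fun t => μ.real (U ⁻¹' Iic t ∩ E)) (f - deriv (fun x => C (F x) (G z)) z) z := by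
  have hK : ∀ x y, μ.real (U ⁻¹' Iic x ∩ V ⁻¹' Ioi y) = F x - C (F x) (G y) := fun x y => by
    rw [measureReal_preimage_Iic_inter_Ioi hU hV, hjoint, ← hF]
  have h01 : ∀ s : Set Ω, μ.real s ∈ Icc 0 1 := fun s => ⟨measureReal_nonneg, measureReal_le_one⟩
  have hCz : HasDerivAt (fun x => C (F x) (G z)) _ z :=
    (hC.hasDerivAt_fst (F z) (G z)).comp z hFz
  refine hasDerivAt_of_increment_bounds (K := fun x y => F x - C (F x) (G y))
    (fun a b hab => ?_) (hFz.sub hCz.differentiableAt.hasDerivAt) ?_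
  · simp only [← hK]
    rw [measureReal_preimage_Iic_inter_sub hU (hV measurableSet_Ioi) hab,
      measureReal_preimage_Iic_inter_sub hU (hV measurableSet_Ioi) hab,
      measureReal_preimage_Iic_inter_sub hU hE hab]
    exact ⟨measureReal_mono fun ω ⟨hUab, hbV⟩ => ⟨hUab, hlt (hUab.2.trans_lt hbV)⟩,
      measureReal_mono fun ω ⟨hUab, hω⟩ => ⟨hUab, hUab.1.trans_le (hle hω)⟩⟩
  · refine (hC.isLittleO_rectangle (fun x => hF x ▸ h01 _) (fun y => hG y ▸ h01 _) hFz
      hGz).neg_left.congr_left fun w => ?_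
    ring

variable {X Y : Ω → ℝ} {FX FY : ℝ → ℝ}

theorem hasDerivAt_measureReal_min_le_and_le (hX : Measurable X) (hY : Measurable Y)
    (hC : HasContinuousDensity C c)
    (hFX : ∀ x, FX x = μ.real (X ⁻¹' Iic x)) (hFY : ∀ y, FY y = μ.real (Y ⁻¹' Iic y))
    (hjoint : ∀ x y, μ.real (X ⁻¹' Iic x ∩ Y ⁻¹' Iic y) = C (FX x) (FY y))
    {z f : ℝ} (hFXz : HasDerivAt FX f z) (hFYz : ContinuousAt FY z) :
    HasDerivAt (fun t => μ.real {ω | min (X ω) (Y ω) ≤ t ∧ X ω ≤ Y ω})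
      (f - deriv (fun x => C (FX x) (FY z)) z) z := by
  have hset : ∀ t, {ω | min (X ω) (Y ω) ≤ t ∧ X ω ≤ Y ω} = X ⁻¹' Iic t ∩ {ω | X ω ≤ Y ω} :=
    fun t => ext fun ω => and_congr_left fun h => by rw [min_eq_left h]; rfl
  simp only [hset]
  exact hasDerivAt_measureReal_preimage_Iic_inter hX hY (measurableSet_le hX hY)
    (fun ω h => show X ω ≤ Y ω from le_of_lt h) le_rfl hC hFX hFY hjoint hFXz hFYz

theorem hasDerivAt_measureReal_min_le_and_not_le (hX : Measurable X) (hY : Measurable Y)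
    (hC : HasContinuousDensity C c)
    (hFX : ∀ x, FX x = μ.real (X ⁻¹' Iic x)) (hFY : ∀ y, FY y = μ.real (Y ⁻¹' Iic y))
    (hjoint : ∀ x y, μ.real (X ⁻¹' Iic x ∩ Y ⁻¹' Iic y) = C (FX x) (FY y))
    {z f : ℝ} (hFYz : HasDerivAt FY f z) (hFXz : ContinuousAt FX z) :
    HasDerivAt (fun t => μ.real {ω | min (X ω) (Y ω) ≤ t ∧ ¬ X ω ≤ Y ω})
      (f - deriv (fun y => C (FX z) (FY y)) z) z := by
  have hset : ∀ t, {ω | min (X ω) (Y ω) ≤ t ∧ ¬ X ω ≤ Y ω} = Y ⁻¹' Iic t ∩ {ω | ¬ X ω ≤ Y ω} :=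
    fun t => ext fun ω => and_congr_left fun h => by rw [min_eq_right (not_le.1 h).le]; rfl
  simp only [hset]
  exact hasDerivAt_measureReal_preimage_Iic_inter hY hX (measurableSet_le hX hY).compl
    (fun ω h => show ¬ X ω ≤ Y ω from not_le.2 h)
    (fun ω (h : ¬ X ω ≤ Y ω) => (not_le.1 h).le) hC.swap hFY hFX
    (fun y x => by rw [inter_comm]; exact hjoint x y) hFYz hFXz

theorem tendsto_measureReal_setOf_le_and_atBot {Z : Ω → ℝ} (hZ : Measurable Z) (p : Ω → Prop) :
    Tendsto (fun t => μ.real {ω | Z ω ≤ t ∧ p ω}) atBot (𝓝 0) := by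
  have hcdf : Tendsto (fun t => μ.real (Z ⁻¹' Iic t)) atBot (𝓝 0) := by
    have := Measure.isProbabilityMeasure_map (μ := μ) hZ.aemeasurable
    refine (ProbabilityTheory.tendsto_cdf_atBot (μ.map Z)).congr fun t => ?_
    rw [ProbabilityTheory.cdf_eq_real, map_measureReal_apply hZ measurableSet_Iic]
  exact tendsto_of_tendsto_of_tendsto_of_le_of_le tendsto_const_nhds hcdf
    (fun _ => measureReal_nonneg) fun _ => measureReal_mono fun _ h => h.1

end Copula

theorem eq_iff_of_hasDerivAt_of_tendsto_atBot {f g f' g' : ℝ → ℝ}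
    (hf : ∀ x, HasDerivAt f (f' x) x) (hg : ∀ x, HasDerivAt g (g' x) x)
    (hf0 : Tendsto f atBot (𝓝 0)) (hg0 : Tendsto g atBot (𝓝 0)) :
    f = g ↔ f' = g' := by
  constructor
  · rintro rfl
    exact funext fun x => (hf x).unique (hg x)
  · rintro rfl
    have hconst : ∀ x y, (f - g) x = (f - g) y :=
      is_const_of_deriv_eq_zero (fun x => ((hf x).sub (hg x)).differentiableAt)
        fun x => by simpa using ((hf x).sub (hg x)).deriv
    have hzero : ∀ x, (f - g) x = 0 := fun x =>
      tendsto_nhds_unique (tendsto_const_nhds.congr (hconst x)) (sub_zero (0:ℝ) ▸ hf0.sub hg0)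
    exact funext fun x => sub_eq_zero.1 (hzero x)

theorem stmt17_general {Ω Ω' : Type*} [MeasurableSpace Ω] [MeasurableSpace Ω']
    (μ : Measure Ω) [IsProbabilityMeasure μ] (μ' : Measure Ω') [IsProbabilityMeasure μ']
    (X Y : Ω → ℝ) (X' Y' : Ω' → ℝ)
    (hX : Measurable X) (hY : Measurable Y) (hX' : Measurable X') (hY' : Measurable Y')
    (FX FY fX fY : ℝ → ℝ) (C c C₂ c₂ : ℝ → ℝ → ℝ)
    -- common differentiable margins
    (hFX : ∀ x, FX x = (μ {ω | X ω ≤ x}).toReal)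
    (hFY : ∀ y, FY y = (μ {ω | Y ω ≤ y}).toReal)
    (hFX' : ∀ x, FX x = (μ' {ω | X' ω ≤ x}).toReal)
    (hFY' : ∀ y, FY y = (μ' {ω | Y' ω ≤ y}).toReal)
    (hfX : ∀ z, HasDerivAt FX (fX z) z)
    (hfY : ∀ z, HasDerivAt FY (fY z) z)
    -- the copulas and their densities
    (hccont : Continuous (Function.uncurry c))
    (hC : ∀ a b : ℝ, C a b = ∫ u in (0:ℝ)..a, ∫ v in (0:ℝ)..b, c u v)
    (hccont₂ : Continuous (Function.uncurry c₂))
    (hC₂ : ∀ a b : ℝ, C₂ a b = ∫ u in (0:ℝ)..a, ∫ v in (0:ℝ)..b, c₂ u v)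
    -- joint laws given by the copulas
    (hjoint : ∀ x y, (μ {ω | X ω ≤ x ∧ Y ω ≤ y}).toReal = C (FX x) (FY y))
    (hjoint' : ∀ x y, (μ' {ω | X' ω ≤ x ∧ Y' ω ≤ y}).toReal = C₂ (FX x) (FY y)) :
    ((∀ z : ℝ,
        μ {ω | min (X ω) (Y ω) ≤ z ∧ X ω ≤ Y ω}
          = μ' {ω | min (X' ω) (Y' ω) ≤ z ∧ X' ω ≤ Y' ω} ∧
        μ {ω | min (X ω) (Y ω) ≤ z ∧ ¬ X ω ≤ Y ω}
          = μ' {ω | min (X' ω) (Y' ω) ≤ z ∧ ¬ X' ω ≤ Y' ω})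
      ↔
      (∀ z : ℝ,
        deriv (fun x => C (FX x) (FY z)) z = deriv (fun x => C₂ (FX x) (FY z)) z ∧
        deriv (fun y => C (FX z) (FY y)) z = deriv (fun y => C₂ (FX z) (FY y)) z)) := by
  have hCc : HasContinuousDensity C c := ⟨hccont, hC⟩
  have hCc₂ : HasContinuousDensity C₂ c₂ := ⟨hccont₂, hC₂⟩
  have hFXc : Continuous FX := continuous_iff_continuousAt.2 fun x => (hfX x).continuousAt
  have hFYc : Continuous FY := continuous_iff_continuousAt.2 fun x => (hfY x).continuousAt
  have hΔ₁ := eq_iff_of_hasDerivAt_of_tendsto_atBot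
    (fun z => hasDerivAt_measureReal_min_le_and_le hX hY hCc hFX hFY hjoint (hfX z)
      hFYc.continuousAt)
    (fun z => hasDerivAt_measureReal_min_le_and_le hX' hY' hCc₂ hFX' hFY' hjoint' (hfX z)
      hFYc.continuousAt)
    (tendsto_measureReal_setOf_le_and_atBot (hX.min hY) _)
    (tendsto_measureReal_setOf_le_and_atBot (hX'.min hY') _)
  have hΔ₀ := eq_iff_of_hasDerivAt_of_tendsto_atBot
    (fun z => hasDerivAt_measureReal_min_le_and_not_le hX hY hCc hFX hFY hjoint (hfY z)
      hFXc.continuousAt)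
    (fun z => hasDerivAt_measureReal_min_le_and_not_le hX' hY' hCc₂ hFX' hFY' hjoint' (hfY z)
      hFXc.continuousAt)
    (tendsto_measureReal_setOf_le_and_atBot (hX.min hY) _)
    (tendsto_measureReal_setOf_le_and_atBot (hX'.min hY') _)
  simp only [funext_iff, sub_right_inj, measureReal_def,
    ENNReal.toReal_eq_toReal_iff' (measure_ne_top _ _) (measure_ne_top _ _)] at hΔ₁ hΔ₀
  simp only [forall_and]
  exact and_congr hΔ₁ hΔ₀

/-- Two copulas `C, C'` with (continuous) densities, combined with the same known
differentiable margins `F_X, F_Y`, induce the same joint distribution of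
`(Z, Δ) = (min(X,Y), 1_{X ≤ Y})` if and only if both partial derivatives
`∂ₓ C(F_X(x), F_Y(z))|_{x=z}` and `∂_y C(F_X(z), F_Y(y))|_{y=z}` of the two copulas
coincide for every `z`. -/
theorem stmt17 {Ω Ω' : Type*} [MeasurableSpace Ω] [MeasurableSpace Ω']
    (μ : Measure Ω) [IsProbabilityMeasure μ] (μ' : Measure Ω') [IsProbabilityMeasure μ']
    (X Y : Ω → ℝ) (X' Y' : Ω' → ℝ)
    (hX : Measurable X) (hY : Measurable Y) (hX' : Measurable X') (hY' : Measurable Y')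
    (FX FY fX fY : ℝ → ℝ) (C c C₂ c₂ : ℝ → ℝ → ℝ)
    -- common differentiable margins
    (hFX : ∀ x, FX x = (μ {ω | X ω ≤ x}).toReal)
    (hFY : ∀ y, FY y = (μ {ω | Y ω ≤ y}).toReal)
    (hFX' : ∀ x, FX x = (μ' {ω | X' ω ≤ x}).toReal)
    (hFY' : ∀ y, FY y = (μ' {ω | Y' ω ≤ y}).toReal)
    (hfX : ∀ z, HasDerivAt FX (fX z) z)
    (hfY : ∀ z, HasDerivAt FY (fY z) z)
    -- the copulas and their densities
    (hcnn : ∀ u v, 0 ≤ c u v) (hccont : Continuous (Function.uncurry c))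
    (hC : ∀ a b : ℝ, C a b = ∫ u in (0:ℝ)..a, ∫ v in (0:ℝ)..b, c u v)
    (hmarg1 : ∀ u ∈ Icc (0:ℝ) 1, ∫ v in (0:ℝ)..1, c u v = 1)
    (hmarg2 : ∀ v ∈ Icc (0:ℝ) 1, ∫ u in (0:ℝ)..1, c u v = 1)
    (hcnn₂ : ∀ u v, 0 ≤ c₂ u v) (hccont₂ : Continuous (Function.uncurry c₂))
    (hC₂ : ∀ a b : ℝ, C₂ a b = ∫ u in (0:ℝ)..a, ∫ v in (0:ℝ)..b, c₂ u v)
    (hmarg1₂ : ∀ u ∈ Icc (0:ℝ) 1, ∫ v in (0:ℝ)..1, c₂ u v = 1)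
    (hmarg2₂ : ∀ v ∈ Icc (0:ℝ) 1, ∫ u in (0:ℝ)..1, c₂ u v = 1)
    -- joint laws given by the copulas
    (hjoint : ∀ x y, (μ {ω | X ω ≤ x ∧ Y ω ≤ y}).toReal = C (FX x) (FY y))
    (hjoint' : ∀ x y, (μ' {ω | X' ω ≤ x ∧ Y' ω ≤ y}).toReal = C₂ (FX x) (FY y)) :
    ((∀ z : ℝ,
        μ {ω | min (X ω) (Y ω) ≤ z ∧ X ω ≤ Y ω}
          = μ' {ω | min (X' ω) (Y' ω) ≤ z ∧ X' ω ≤ Y' ω} ∧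
        μ {ω | min (X ω) (Y ω) ≤ z ∧ ¬ X ω ≤ Y ω}
          = μ' {ω | min (X' ω) (Y' ω) ≤ z ∧ ¬ X' ω ≤ Y' ω})
      ↔
      (∀ z : ℝ,
        deriv (fun x => C (FX x) (FY z)) z = deriv (fun x => C₂ (FX x) (FY z)) z ∧
        deriv (fun y => C (FX z) (FY y)) z = deriv (fun y => C₂ (FX z) (FY y)) z)) :=
  stmt17_general μ μ' X Y X' Y' hX hY hX' hY' FX FY fX fY C c C₂ c₂ hFX hFY hFX' hFY' hfX hfY hccont
    hC hccont₂ hC₂ hjoint hjoint'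
end
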